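/- arXiv:2603.29802 — 3 statements merged into one kernel-verified Lean document; each statement's English description precedes it below -/
import Mathlib

section
/- The polynomial Ψ₃(x,y) = x⁴ − x³y³ + 8xy + y⁴ satisfies Ψ₃(x,y) = Ψ₃(y,x), and Φ₃(x,y) := Ψ₃(x³,y³) = x¹² − x⁹y⁹ + 8x³y³ + y¹² is irreducible over ℚ. -/
section WeberAux
open Polynomial

noncomputable def f2 : Polynomial (ZMod 2) := X ^ 12 + X ^ 9 + 1

lemma f2_monic : f2.Monic := by
  unfold f2; monicity!

lemma f2_natDegree : f2.natDegree = 12 := by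
  unfold f2; compute_degree!

lemma no_small_factor (g : Polynomial (ZMod 2)) (hg : Irreducible g) (hdvd : g ∣ f2)
    (hd : g.natDegree ≤ 6) : False := by
  haveI : Fact (Irreducible g) := ⟨hg⟩
  have hg0 : g ≠ 0 := hg.ne_zero
  have hd1 : 1 ≤ g.natDegree := natDegree_pos_iff_degree_pos.mpr (degree_pos_of_irreducible hg)
  set K := AdjoinRoot g
  set a : K := AdjoinRoot.root g
  have hf : a ^ 12 + a ^ 9 + 1 = 0 := by
    have : (Polynomial.aeval a) f2 = 0 := by
      rw [AdjoinRoot.aeval_eq, AdjoinRoot.mk_eq_zero]; exact hdvd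
    simpa [f2] using this
  haveI : Module.Finite (ZMod 2) K := (AdjoinRoot.powerBasis hg0).finite
  haveI : Finite K := Module.finite_of_finite (ZMod 2)
  haveI : Fintype K := Fintype.ofFinite K
  have hcard : Fintype.card K = 2 ^ g.natDegree := by
    rw [Module.card_fintype (AdjoinRoot.powerBasis hg0).basis]
    simp [AdjoinRoot.powerBasis_dim]
  have hc0 : a ^ (2 ^ g.natDegree) = a := by
    rw [← hcard]; exact FiniteField.pow_card a
  have h2 : (2 : K) = 0 := by
    rw [← map_ofNat (algebraMap (ZMod 2) K) 2, show (OfNat.ofNat 2 : ZMod 2) = 0 by decide,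
      map_zero]
  have hone : (1 : K) = 0 := by
    interval_cases h : g.natDegree
    · have hc : a ^ (2:ℕ) = a := by simpa using hc0
      linear_combination (1) * hf + (a^8 + a^9 + a^10) * hc - (a^12) * h2
    · have hc : a ^ (4:ℕ) = a := by simpa using hc0
      linear_combination (1) * hf + (a^8) * hc - (a^12) * h2
    · have hc : a ^ (8:ℕ) = a := by simpa using hc0
      linear_combination (1 + a + a^2 + a^5 + a^6) * hf + (1 + a + a^4 + a^5 + a^7 + a^9 + a^10) * hc - (a^9 + a^12 + a^13 + a^14 + a^15 + a^17 + a^18) * h2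
    · have hc : a ^ (16:ℕ) = a := by simpa using hc0
      linear_combination (1 + a^3 + a^9 + a^12 + a^15) * hf + (a^2 + a^11) * hc - (a^9 + a^12 + a^15 + a^18 + a^21 + a^24 + a^27) * h2
    · have hc : a ^ (32:ℕ) = a := by simpa using hc0
      linear_combination (1 + a^4 + a^5 + a^7 + a^8 + a^11 + a^12 + a^13 + a^14 + a^19 + a^21 + a^22 + a^24 + a^25 + a^26 + a^28 + a^30) * hf + (a^3 + a^4 + a^6 + a^7 + a^8 + a^10) * hc - (a^12 + a^13 + a^14 + a^16 + a^17 + a^19 + a^20 + a^21 + a^22 + a^23 + a^24 + a^25 + a^26 + a^28 + a^30 + a^31 + a^33 + a^34 + a^35 + a^36 + a^37 + a^38 + a^39 + a^40 + a^42) * h2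
    · have hc : a ^ (64:ℕ) = a := by simpa using hc0
      linear_combination (1 + a^3 + a^6 + a^12 + a^18 + a^21 + a^24 + a^27 + a^39 + a^48 + a^51 + a^57 + a^63) * hf + (a^2 + a^5 + a^8 + a^11) * hc - (a^12 + a^15 + a^18 + a^21 + a^24 + a^27 + a^30 + a^33 + a^36 + a^39 + a^48 + a^51 + a^57 + a^60 + a^63 + a^66 + a^69 + a^72 + a^75) * h2
  exact one_ne_zero hone

lemma f2_irreducible : Irreducible f2 := by
  constructor
  · intro h
    have := natDegree_eq_zero_of_isUnit h
    rw [f2_natDegree] at this; exact absurd this (by norm_num)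
  · intro p q hpq
    by_contra hcon
    push_neg at hcon
    obtain ⟨hp, hq⟩ := hcon
    have hf0 : f2 ≠ 0 := f2_monic.ne_zero
    have hp0 : p ≠ 0 := fun h => hf0 (by rw [hpq, h, zero_mul])
    have hq0 : q ≠ 0 := fun h => hf0 (by rw [hpq, h, mul_zero])
    have hsum : p.natDegree + q.natDegree = 12 := by
      rw [← Polynomial.natDegree_mul hp0 hq0, ← hpq, f2_natDegree]
    -- one of the factors has natDegree ≤ 6
    have hsmall : ∃ r : Polynomial (ZMod 2), r ∣ f2 ∧ ¬IsUnit r ∧ r ≠ 0 ∧ r.natDegree ≤ 6 := by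
      rcases le_or_gt p.natDegree 6 with h | h
      · exact ⟨p, Dvd.intro q hpq.symm, hp, hp0, h⟩
      · exact ⟨q, Dvd.intro_left p hpq.symm, hq, hq0, by omega⟩
    obtain ⟨r, hrdvd, hru, hr0, hr6⟩ := hsmall
    obtain ⟨g, hgirr, hgdvd⟩ := WfDvdMonoid.exists_irreducible_factor hru hr0
    exact no_small_factor g hgirr (hgdvd.trans hrdvd)
      ((Polynomial.natDegree_le_of_dvd hgdvd hr0).trans hr6)


noncomputable def qZ : Polynomial ℤ := X ^ 12 - X ^ 9 + 8 * X ^ 3 + 1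

lemma qZ_monic : qZ.Monic := by unfold qZ; monicity!

lemma qZ_irreducible : Irreducible qZ := by
  apply qZ_monic.irreducible_of_irreducible_map (Int.castRingHom (ZMod 2))
  have : qZ.map (Int.castRingHom (ZMod 2)) = f2 := by
    unfold qZ f2
    simp only [Polynomial.map_add, Polynomial.map_sub, Polynomial.map_mul, Polynomial.map_pow,
      Polynomial.map_ofNat, Polynomial.map_one, Polynomial.map_X]
    have h2 : (2 : Polynomial (ZMod 2)) = 0 := by
      rw [← map_ofNat (C : ZMod 2 →+* Polynomial (ZMod 2)) 2,
        show (OfNat.ofNat 2 : ZMod 2) = 0 by decide, map_zero]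
    linear_combination ((4 : Polynomial (ZMod 2)) * X ^ 3 - X ^ 9) * h2
  rw [this]; exact f2_irreducible

noncomputable def qQ : Polynomial ℚ := X ^ 12 - X ^ 9 + 8 * X ^ 3 + 1

lemma qQ_irreducible : Irreducible qQ := by
  have hmap : qZ.map (algebraMap ℤ ℚ) = qQ := by
    unfold qZ qQ
    simp [Polynomial.map_add, Polynomial.map_sub, Polynomial.map_mul, Polynomial.map_pow,
      Polynomial.map_ofNat]
  rw [← hmap]
  exact (qZ_monic.irreducible_iff_irreducible_map_fraction_map).mp qZ_irreducible

-- P in (ℚ[Y])[X]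
noncomputable def Y : Polynomial (Polynomial ℚ) := C X
noncomputable def P : Polynomial (Polynomial ℚ) :=
  X ^ 12 - Y ^ 9 * X ^ 9 + 8 * Y ^ 3 * X ^ 3 + Y ^ 12

lemma P_monic : P.Monic := by
  unfold P Y
  monicity!

lemma P_irreducible : Irreducible P := by
  apply P_monic.irreducible_of_irreducible_map (Polynomial.evalRingHom 1)
  have : P.map (evalRingHom 1) = qQ := by
    unfold P Y qQ
    simp [Polynomial.map_add, Polynomial.map_sub, Polynomial.map_mul, Polynomial.map_pow,
      Polynomial.map_ofNat, Polynomial.map_C, eval_X]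
  rw [this]; exact qQ_irreducible
end WeberAux

section WeberAux2

noncomputable def Pn : Polynomial (Polynomial ℚ) :=
  Polynomial.X ^ 12 - (Polynomial.C Polynomial.X) ^ 9 * Polynomial.X ^ 9
    + 8 * (Polynomial.C Polynomial.X) ^ 3 * Polynomial.X ^ 3 + (Polynomial.C Polynomial.X) ^ 12

lemma Pn_irreducible : Irreducible Pn := by
  have : Pn = P := by unfold Pn P Y; ring
  rw [this]; exact P_irreducible

noncomputable def eqv : MvPolynomial (Fin 2) ℚ ≃ₐ[ℚ] Polynomial (Polynomial ℚ) :=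
  (MvPolynomial.finSuccEquiv ℚ 1).trans
    (Polynomial.mapAlgEquiv
      ((MvPolynomial.finSuccEquiv ℚ 0).trans
        (Polynomial.mapAlgEquiv (MvPolynomial.isEmptyAlgEquiv ℚ (Fin 0)))))

end WeberAux2

open MvPolynomial

/-- `Ψ₃(x,y) = x⁴ − x³y³ + 8xy + y⁴` is symmetric, and
`Φ₃(x,y) = Ψ₃(x³,y³) = x¹² − x⁹y⁹ + 8x³y³ + y¹²` is irreducible over `ℚ`. -/
theorem weber_phi3_symmetric_and_irreducible :
    let x : MvPolynomial (Fin 2) ℚ := MvPolynomial.X 0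
    let y : MvPolynomial (Fin 2) ℚ := MvPolynomial.X 1
    let Ψ₃ : MvPolynomial (Fin 2) ℚ := x ^ 4 - x ^ 3 * y ^ 3 + 8 * x * y + y ^ 4
    let Φ₃ : MvPolynomial (Fin 2) ℚ :=
      x ^ 12 - x ^ 9 * y ^ 9 + 8 * x ^ 3 * y ^ 3 + y ^ 12
    (rename (Equiv.swap (0 : Fin 2) 1) Ψ₃ = Ψ₃) ∧
      (bind₁ (fun i : Fin 2 => (MvPolynomial.X i) ^ 3) Ψ₃ = Φ₃) ∧
      Irreducible Φ₃ := by
  intro x y Ψ₃ Φ₃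
  refine ⟨?_, ?_, ?_⟩
  · show rename (Equiv.swap (0 : Fin 2) 1) (x ^ 4 - x ^ 3 * y ^ 3 + 8 * x * y + y ^ 4) = Ψ₃
    simp only [map_add, map_sub, map_mul, map_pow, map_ofNat, rename_X, x, y, Ψ₃,
      Equiv.swap_apply_left, Equiv.swap_apply_right]
    ring
  · show bind₁ (fun i : Fin 2 => (MvPolynomial.X i) ^ 3)
        (x ^ 4 - x ^ 3 * y ^ 3 + 8 * x * y + y ^ 4) = Φ₃
    simp only [map_add, map_sub, map_mul, map_pow, map_ofNat, bind₁_X_right, x, y, Φ₃]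
    ring
  · have hx : eqv x = Polynomial.X := by
      simp [eqv, x, finSuccEquiv_X_zero, Polynomial.mapAlgEquiv]
    have hy : eqv y = Polynomial.C Polynomial.X := by
      have h1 : y = MvPolynomial.X ((0 : Fin 1).succ) := rfl
      rw [show eqv y = Polynomial.mapAlgEquiv
          ((MvPolynomial.finSuccEquiv ℚ 0).trans
            (Polynomial.mapAlgEquiv (MvPolynomial.isEmptyAlgEquiv ℚ (Fin 0))))
          ((MvPolynomial.finSuccEquiv ℚ 1) y) from rfl, h1, finSuccEquiv_X_succ]
      simp [Polynomial.mapAlgEquiv, finSuccEquiv_X_zero]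
    have he : eqv Φ₃ = Pn := by
      show eqv (x ^ 12 - x ^ 9 * y ^ 9 + 8 * x ^ 3 * y ^ 3 + y ^ 12) = Pn
      rw [map_add, map_add, map_sub, map_pow, map_mul, map_pow, map_pow, map_mul, map_mul,
        map_pow, map_pow, map_pow, hx, hy, map_ofNat]
      unfold Pn; ring
    exact (MulEquiv.irreducible_iff
        (eqv : MvPolynomial (Fin 2) ℚ ≃* Polynomial (Polynomial ℚ))).mp
      (by rw [show (eqv : MvPolynomial (Fin 2) ℚ ≃* Polynomial (Polynomial ℚ)) Φ₃ = eqv Φ₃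
          from rfl, he]; exact Pn_irreducible)
end

section
/- With the matrices ιS, ιT ∈ GL₃(ℂ) as above, the squares (ιT)² = diag(ζ₂₄⁻¹, ζ₂₄⁻¹, ζ₂₄²) and (ιS·ιT·ιS)² = diag(ζ₂₄⁻¹, ζ₂₄², ζ₂₄⁻¹), and the subgroup D of GL₃(ℂ) generated by these two diagonal matrices is abelian of order 192. -/
open Matrix

set_option maxHeartbeats 1600000 in
/-- The squares `(ιT)²` and `(ιS·ιT·ιS)²` are the indicated diagonal matrices,
and the subgroup `D` of `GL₃(ℂ)` they generate is abelian of order `192`. -/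
theorem weber_diagonal_subgroup (ζ : ℂ) (hζ : IsPrimitiveRoot ζ 24) :
    let ζ₈ : ℂ := ζ ^ 3
    let ιS : Matrix (Fin 3) (Fin 3) ℂ := !![1, 0, 0; 0, 0, ζ₈⁻¹; 0, ζ₈, 0]
    let ιT : Matrix (Fin 3) (Fin 3) ℂ := !![0, ζ, 0; (ζ ^ 2)⁻¹, 0, 0; 0, 0, ζ]
    (ιT ^ 2 = Matrix.diagonal ![ζ⁻¹, ζ⁻¹, ζ ^ 2]) ∧
    ((ιS * ιT * ιS) ^ 2 = Matrix.diagonal ![ζ⁻¹, ζ ^ 2, ζ⁻¹]) ∧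
    ∀ A B : GL (Fin 3) ℂ,
      (A : Matrix (Fin 3) (Fin 3) ℂ) = ιT ^ 2 →
      (B : Matrix (Fin 3) (Fin 3) ℂ) = (ιS * ιT * ιS) ^ 2 →
      (∀ x ∈ Subgroup.closure {A, B}, ∀ y ∈ Subgroup.closure {A, B}, x * y = y * x) ∧
        Nat.card (Subgroup.closure {A, B} : Subgroup (GL (Fin 3) ℂ)) = 192 := by
  intro ζ₈ ιS ιT
  have hz0 : ζ ≠ 0 := hζ.ne_zero (by norm_num)
  have h24 : ζ ^ 24 = 1 := hζ.pow_eq_one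
  have hdvd : ∀ n : ℕ, ζ ^ n = 1 ↔ 24 ∣ n := fun n => hζ.pow_eq_one_iff_dvd n
  have hmod : ∀ n : ℕ, ζ ^ n = ζ ^ (n % 24) := fun n => pow_eq_pow_mod n h24
  have hinv : ζ⁻¹ = ζ ^ 23 := by
    refine inv_eq_of_mul_eq_one_right ?_
    rw [← pow_succ']; exact h24
  have hT2 : ιT ^ 2 = Matrix.diagonal ![ζ⁻¹, ζ⁻¹, ζ ^ 2] := by
    ext i j
    fin_cases i <;> fin_cases j <;>
      simp [ιT, pow_two, Matrix.mul_apply, Fin.sum_univ_three, Matrix.diagonal_apply,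
        Matrix.vecHead, Matrix.vecTail]
    all_goals field_simp
  have hS2 : (ιS * ιT * ιS) ^ 2 = Matrix.diagonal ![ζ⁻¹, ζ ^ 2, ζ⁻¹] := by
    ext i j
    fin_cases i <;> fin_cases j <;>
      simp [ιS, ιT, ζ₈, pow_two, Matrix.mul_apply, Fin.sum_univ_three,
        Matrix.diagonal_apply, Matrix.vecHead, Matrix.vecTail]
    all_goals field_simp
    all_goals ring
  refine ⟨hT2, hS2, ?_⟩
  intro A B hA hB
  have hA' : (A : Matrix (Fin 3) (Fin 3) ℂ) = diagonal ![ζ ^ 23, ζ ^ 23, ζ ^ 2] := by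
    rw [hA, hT2, hinv]
  have hB' : (B : Matrix (Fin 3) (Fin 3) ℂ) = diagonal ![ζ ^ 23, ζ ^ 2, ζ ^ 23] := by
    rw [hB, hS2, hinv]
  have hvw : ∀ v w : Fin 3 → ℂ, diagonal v * diagonal w = diagonal w * diagonal v := by
    intro v w
    simp [diagonal_mul_diagonal, mul_comm]
  have hABc : Commute A B := by
    apply Units.ext
    show (A : Matrix (Fin 3) (Fin 3) ℂ) * B = (B : Matrix (Fin 3) (Fin 3) ℂ) * A
    rw [hA', hB', hvw]
  -- the abelian part
  have hcomm : ∀ x ∈ Subgroup.closure {A, B}, ∀ y ∈ Subgroup.closure {A, B},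
      x * y = y * x := by
    intro x hx y hy
    refine Subgroup.closure_induction₂ (p := fun x y _ _ => Commute x y)
      ?_ ?_ ?_ ?_ ?_ ?_ ?_ hx hy
    · rintro x y (rfl | rfl) (rfl | rfl)
      · exact Commute.refl _
      · exact hABc
      · exact hABc.symm
      · exact Commute.refl _
    · exact fun x _ => Commute.one_left x
    · exact fun x _ => Commute.one_right x
    · exact fun x y z _ _ _ h1 h2 => h1.mul_left h2
    · exact fun y z x _ _ _ h1 h2 => h1.mul_right h2
    · exact fun x y _ _ h => h.inv_left
    · exact fun x y _ _ h => h.inv_right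
  refine ⟨hcomm, ?_⟩
  -- the cardinality part
  set d : GL (Fin 3) ℂ := A ^ 2 * B with hdDef
  have hone : ((1 : GL (Fin 3) ℂ) : Matrix (Fin 3) (Fin 3) ℂ) = diagonal ![1, 1, 1] := by
    rw [Units.val_one, ← diagonal_one]
    refine congrArg _ (funext fun i => ?_)
    fin_cases i <;> rfl
  have hd : (d : Matrix (Fin 3) (Fin 3) ℂ) = diagonal ![ζ ^ 21, 1, ζ ^ 3] := by
    rw [hdDef, Units.val_mul, Units.val_pow_eq_pow_val, hA', hB', diagonal_pow,
      diagonal_mul_diagonal]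
    ext i j
    fin_cases i <;> fin_cases j <;>
      simp [Matrix.diagonal_apply, Matrix.vecHead, Matrix.vecTail, ← pow_mul, ← pow_add]
    all_goals (rw [hmod]; try norm_num)
  have hA24 : A ^ 24 = 1 := by
    apply Units.ext
    rw [Units.val_pow_eq_pow_val, hA', diagonal_pow, hone]
    ext i j
    fin_cases i <;> fin_cases j <;>
      simp [Matrix.diagonal_apply, Matrix.vecHead, Matrix.vecTail, ← pow_mul]
    all_goals (rw [hmod]; try norm_num)
  have hd8 : d ^ 8 = 1 := by
    apply Units.ext
    rw [Units.val_pow_eq_pow_val, hd, diagonal_pow, hone]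
    ext i j
    fin_cases i <;> fin_cases j <;>
      simp [Matrix.diagonal_apply, Matrix.vecHead, Matrix.vecTail, ← pow_mul]
    all_goals (rw [hmod]; try norm_num)
  have hAd : Commute A d := ((Commute.refl A).pow_right 2).mul_right hABc
  have hApow : ∀ x y : ZMod 24, A ^ (x + y).val = A ^ x.val * A ^ y.val := by
    intro x y
    rw [ZMod.val_add, ← pow_eq_pow_mod _ hA24, pow_add]
  have hdpow : ∀ x y : ZMod 8, d ^ (x + y).val = d ^ x.val * d ^ y.val := by
    intro x y
    rw [ZMod.val_add, ← pow_eq_pow_mod _ hd8, pow_add]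
  let f : Multiplicative (ZMod 24 × ZMod 8) → GL (Fin 3) ℂ := fun p =>
    A ^ (Multiplicative.toAdd p).1.val * d ^ (Multiplicative.toAdd p).2.val
  have hfmul : ∀ p q, f (p * q) = f p * f q := by
    intro p q
    show A ^ ((Multiplicative.toAdd p).1 + (Multiplicative.toAdd q).1).val *
        d ^ ((Multiplicative.toAdd p).2 + (Multiplicative.toAdd q).2).val = _
    rw [hApow, hdpow]
    exact (hAd.pow_pow _ _).mul_mul_mul_comm _ _
  let φ : Multiplicative (ZMod 24 × ZMod 8) →* GL (Fin 3) ℂ := MonoidHom.mk' f hfmul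
  have hinj : Function.Injective φ := by
    rw [injective_iff_map_eq_one]
    intro p hp
    have hp' : A ^ (Multiplicative.toAdd p).1.val * d ^ (Multiplicative.toAdd p).2.val = 1 := hp
    set i : ZMod 24 := (Multiplicative.toAdd p).1 with hi
    set j : ZMod 8 := (Multiplicative.toAdd p).2 with hj
    have hmat := congrArg Units.val hp'
    rw [Units.val_mul, Units.val_pow_eq_pow_val, Units.val_pow_eq_pow_val, hA', hd,
      diagonal_pow, diagonal_pow, diagonal_mul_diagonal, hone] at hmat
    have hi0 : i = 0 := by
      have h1 := congrFun (congrFun hmat 1) 1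
      simp [← pow_mul] at h1
      rw [hdvd] at h1
      have hlt : i.val < 24 := ZMod.val_lt i
      have : i.val = 0 := by omega
      exact (ZMod.val_eq_zero i).mp this
    have hj0 : j = 0 := by
      have h2 := congrFun (congrFun hmat 2) 2
      rw [hi0] at h2
      simp [← pow_mul] at h2
      rw [hdvd] at h2
      have hlt : j.val < 8 := ZMod.val_lt j
      have : j.val = 0 := by omega
      exact (ZMod.val_eq_zero j).mp this
    have ht : Multiplicative.toAdd p = 0 := by
      rw [Prod.ext_iff]
      exact ⟨hi0, hj0⟩
    exact Multiplicative.toAdd.injective (by rw [ht, toAdd_one])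
  -- closure = range of φ
  have hAmem : A ∈ Subgroup.closure ({A, B} : Set (GL (Fin 3) ℂ)) :=
    Subgroup.subset_closure (Set.mem_insert _ _)
  have hBmem : B ∈ Subgroup.closure ({A, B} : Set (GL (Fin 3) ℂ)) :=
    Subgroup.subset_closure (Set.mem_insert_of_mem _ rfl)
  have hdmem : d ∈ Subgroup.closure ({A, B} : Set (GL (Fin 3) ℂ)) :=
    mul_mem (pow_mem hAmem 2) hBmem
  have hAr : A ∈ φ.range := by
    refine ⟨Multiplicative.ofAdd (1, 0), ?_⟩
    show A ^ (1 : ZMod 24).val * d ^ (0 : ZMod 8).val = _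
    have h1 : (1 : ZMod 24).val = 1 := by decide
    have h0 : (0 : ZMod 8).val = 0 := by decide
    rw [h1, h0, pow_one, pow_zero, mul_one]
  have hBr : B ∈ φ.range := by
    refine ⟨Multiplicative.ofAdd (22, 1), ?_⟩
    show A ^ (22 : ZMod 24).val * d ^ (1 : ZMod 8).val = _
    have h1 : (22 : ZMod 24).val = 22 := by decide
    have h0 : (1 : ZMod 8).val = 1 := by decide
    rw [h1, h0, pow_one, hdDef, ← mul_assoc, ← pow_add, hA24, one_mul]
  have hrange : Subgroup.closure ({A, B} : Set (GL (Fin 3) ℂ)) = φ.range := by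
    apply le_antisymm
    · rw [Subgroup.closure_le]
      rintro x (rfl | rfl)
      · exact hAr
      · exact hBr
    · rintro x ⟨p, rfl⟩
      exact mul_mem (pow_mem hAmem _) (pow_mem hdmem _)
  rw [hrange]
  have hc1 : Nat.card φ.range = Nat.card (Multiplicative (ZMod 24 × ZMod 8)) :=
    Nat.card_congr (MonoidHom.ofInjective hinj).toEquiv.symm
  rw [hc1]
  simp [Nat.card_eq_fintype_card]
end

section
/- Let K be a field of characteristic ≠ 2 containing i with i² = −1, and let t₁ ∈ K with t₀ = t₁² such that the elliptic curve C₀ : y² = x(x−1)(x+t₀) is nonsingular. Set c₀ = i·t₁ and e₀ = t₁ + i. Then the point T₀ = (c₀, c₀e₀) lies on C₀, satisfies 2·T₀ = (0,0), and (0,0) is a point of order 2 on C₀. -/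
/-!
The curve `y² = x(x² + a x + b)` has the rational `2`-torsion point `(0,0)`. A point `T` satisfies
`2T = (0,0)` exactly when the tangent at `T` passes through `(0,0)`: the line `y = m x` meets the
curve in `x(x² + (a - m²) x + b) = 0`, which has a double root `c` iff `c² = b` and `m² = a + 2c`.
For `C₀` one has `a = t₁² - 1`, `b = -t₁²`, and `c = i t₁`, `m = t₁ + i` solve these equations.
Writing `a² - 4b = (a + 2c)(a - 2c) = m²(a - 2c)`, the discriminant `16 b² (a² - 4b)` is divisible
by `2`, `b` and `m`, so nonsingularity makes all of them nonzero.
-/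

open WeierstrassCurve

namespace WeierstrassCurve.Affine

variable {K : Type*} [Field K] {a b c m : K}

abbrev ofCubicThroughOrigin (a b : K) : Affine K := ⟨0, a, 0, b, 0⟩

lemma Δ_ofCubicThroughOrigin (a b : K) :
    (ofCubicThroughOrigin a b).Δ = 16 * b ^ 2 * (a ^ 2 - 4 * b) := by
  simp only [Δ, b₂, b₄, b₆, b₈]
  ring

lemma Δ_ofCubicThroughOrigin_of_sq_eq (hc : c ^ 2 = b) (hm : m ^ 2 = a + 2 * c) :
    (ofCubicThroughOrigin a b).Δ = 2 ^ 4 * b ^ 2 * m ^ 2 * (a - 2 * c) := by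
  rw [Δ_ofCubicThroughOrigin]
  linear_combination (-16 * b ^ 2 * (a - 2 * c)) * hm + 64 * b ^ 2 * hc

lemma equation_ofCubicThroughOrigin_zero (a b : K) : (ofCubicThroughOrigin a b).Equation 0 0 := by
  rw [equation_iff]
  ring

lemma equation_ofCubicThroughOrigin_of_sq_eq (hc : c ^ 2 = b) (hm : m ^ 2 = a + 2 * c) :
    (ofCubicThroughOrigin a b).Equation c (c * m) := by
  rw [equation_iff]
  linear_combination c ^ 2 * hm + c * hc

variable [DecidableEq K]

lemma two_smul_some_zero (hP : (ofCubicThroughOrigin a b).Nonsingular 0 0) :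
    2 • Point.some _ _ hP = 0 := by
  rw [two_smul]
  exact Point.add_self_of_Y_eq (by simp)

lemma two_smul_some_of_sq_eq (hc : c ^ 2 = b) (hm : m ^ 2 = a + 2 * c) (hcm : 2 * (c * m) ≠ 0)
    (hT : (ofCubicThroughOrigin a b).Nonsingular c (c * m))
    (hP : (ofCubicThroughOrigin a b).Nonsingular 0 0) :
    2 • Point.some _ _ hT = Point.some _ _ hP := by
  have hY : c * m ≠ (ofCubicThroughOrigin a b).negY c (c * m) := by
    simp only [negY]
    intro h
    exact hcm (by linear_combination h)
  have hslope : (ofCubicThroughOrigin a b).slope c c (c * m) (c * m) = m := by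
    rw [slope_of_Y_ne rfl hY, div_eq_iff (sub_ne_zero.mpr hY)]
    simp only [negY]
    linear_combination (-2 * c) * hm - hc
  have hX : (ofCubicThroughOrigin a b).addX c c m = 0 := by
    simp only [addX]
    linear_combination hm
  rw [two_smul, Point.add_self_of_Y_ne hY, Point.some.injEq, hslope]
  refine ⟨hX, ?_⟩
  simp only [addY, negAddY, negY, hX]
  ring

theorem exists_two_smul_some_eq_some_zero (hc : c ^ 2 = b) (hm : m ^ 2 = a + 2 * c)
    (hΔ : (ofCubicThroughOrigin a b).Δ ≠ 0) :
    ∃ (hT : (ofCubicThroughOrigin a b).Nonsingular c (c * m))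
      (hP : (ofCubicThroughOrigin a b).Nonsingular 0 0),
      2 • Point.some _ _ hT = Point.some _ _ hP ∧ Point.some _ _ hP ≠ 0 ∧
        2 • Point.some _ _ hP = 0 := by
  have hΔfactored := hΔ
  rw [Δ_ofCubicThroughOrigin_of_sq_eq hc hm] at hΔfactored
  have h2 : (2 : K) ≠ 0 := fun h => hΔfactored (by rw [h]; ring)
  have hb : b ≠ 0 := fun h => hΔfactored (by rw [h]; ring)
  have hm0 : m ≠ 0 := fun h => hΔfactored (by rw [h]; ring)
  have hc0 : c ≠ 0 := by rintro rfl; exact hb (by rw [← hc]; ring)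
  have hT := (equation_iff_nonsingular_of_Δ_ne_zero hΔ).mp
    (equation_ofCubicThroughOrigin_of_sq_eq hc hm)
  have hP := (equation_iff_nonsingular_of_Δ_ne_zero hΔ).mp (equation_ofCubicThroughOrigin_zero a b)
  exact ⟨hT, hP, two_smul_some_of_sq_eq hc hm (mul_ne_zero h2 (mul_ne_zero hc0 hm0)) hT hP, Point.some_ne_zero hP,
    two_smul_some_zero hP⟩

end WeierstrassCurve.Affine

open Classical in
theorem weber_four_torsion_point_general (K : Type*) [Field K]
    (i t₁ : K) (hi : i ^ 2 = -1) :
    let t₀ : K := t₁ ^ 2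
    let W : WeierstrassCurve.Affine K := ⟨0, t₀ - 1, 0, -t₀, 0⟩
    let c₀ : K := i * t₁
    let e₀ : K := t₁ + i
    W.Δ ≠ 0 →
      ∃ (hT : W.Nonsingular c₀ (c₀ * e₀)) (hP : W.Nonsingular 0 0),
        (2 • (Affine.Point.some _ _ hT) = Affine.Point.some _ _ hP) ∧
        Affine.Point.some _ _ hP ≠ 0 ∧
        2 • (Affine.Point.some _ _ hP) = 0 := by
  intro t₀ W c₀ e₀ hΔ
  have hc : c₀ ^ 2 = -t₀ := by
    simp only [c₀, t₀]
    linear_combination t₁ ^ 2 * hi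
  have he : e₀ ^ 2 = (t₀ - 1) + 2 * c₀ := by
    simp only [e₀, c₀, t₀]
    linear_combination hi
  exact Affine.exists_two_smul_some_eq_some_zero hc he hΔ

open Classical in
/-- On `C₀ : y² = x(x−1)(x+t₀)` with `t₀ = t₁²`, the point
`T₀ = (c₀, c₀e₀)` with `c₀ = i·t₁`, `e₀ = t₁ + i` lies on the curve, doubles
to `(0,0)`, and `(0,0)` is a point of order `2`. -/
theorem weber_four_torsion_point (K : Type*) [Field K] (h2 : (2 : K) ≠ 0)
    (i t₁ : K) (hi : i ^ 2 = -1) :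
    let t₀ : K := t₁ ^ 2
    let W : WeierstrassCurve.Affine K := ⟨0, t₀ - 1, 0, -t₀, 0⟩
    let c₀ : K := i * t₁
    let e₀ : K := t₁ + i
    W.Δ ≠ 0 →
      ∃ (hT : W.Nonsingular c₀ (c₀ * e₀)) (hP : W.Nonsingular 0 0),
        (2 • (Affine.Point.some _ _ hT) = Affine.Point.some _ _ hP) ∧
        Affine.Point.some _ _ hP ≠ 0 ∧
        2 • (Affine.Point.some _ _ hP) = 0 :=
  weber_four_torsion_point_general K i t₁ hi
end
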